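/- arXiv:1206.3688 — 6 statements merged into one kernel-verified Lean document; each statement's English description precedes it below -/
import Mathlib

section
/- Let μ ∈ (0,1), let X be a nonnegative random variable such that X^μ has density y ↦ (sin(πμ)/(πμ)) · 1/(y² + 2y cos(πμ) + 1) on [0,∞), and set A = 1/(1+X). Then A has density z ↦ (sin(πμ)/π) · 1/( z(1-z)·[ ((1-z)/z)^μ + (z/(1-z))^μ + 2cos(πμ) ] ) on (0,1). -/
open MeasureTheory Real Set

/-! Writing `Y = X ^ μ`, we have `A = g Y` with `g y = 1 / (1 + y ^ μ⁻¹)`, a bijection of `(0, ∞)` onto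
`(0, 1)` with inverse `z ↦ ((1 - z) / z) ^ μ`. The density of `A` is the density of `Y` transported
by this inverse, times its Jacobian `μ t / (z (1 - z))` with `t = ((1 - z) / z) ^ μ`; dividing by `t`
turns `t ^ 2 + 2 t cos (π μ) + 1` into `t + t⁻¹ + 2 cos (π μ)`, and `t⁻¹ = (z / (1 - z)) ^ μ`. -/

theorem map_withDensity_eq_withDensity_abs_deriv {s t : Set ℝ} {g h h' : ℝ → ℝ}
    (hg : Measurable g) (ht : MeasurableSet t) (hgst : MapsTo g s t) (hhts : MapsTo h t s)
    (hinv : InvOn h g s t) (hh' : ∀ z ∈ t, HasDerivWithinAt h (h' z) t z) (f : ℝ → ENNReal) :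
    ((volume.restrict s).withDensity f).map g =
      (volume.restrict t).withDensity fun z => ENNReal.ofReal |h' z| * f (h z) := by
  ext E hE
  have hpre : g ⁻¹' E ∩ s = h '' (E ∩ t) := by
    rw [hinv.2.image_inter', (hinv.symm.bijOn hhts hgst).image_eq]
  rw [Measure.map_apply hg hE, withDensity_apply _ (hg hE), Measure.restrict_restrict (hg hE),
    withDensity_apply _ hE, Measure.restrict_restrict hE, hpre,
    lintegral_image_eq_lintegral_abs_deriv_mul (hE.inter ht)
      (fun z hz => (hh' z hz.2).mono inter_subset_right) (hinv.2.injOn.mono inter_subset_right)]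

theorem mapsTo_one_div_one_add_rpow (r : ℝ) :
    MapsTo (fun y : ℝ => 1 / (1 + y ^ r)) (Ioi 0) (Ioo 0 1) := fun y hy => by
  have hyr : 0 < y ^ r := rpow_pos_of_pos hy r
  exact ⟨by positivity, (div_lt_one (by positivity)).2 (by linarith)⟩

theorem mapsTo_one_sub_div_rpow (μ : ℝ) :
    MapsTo (fun z : ℝ => ((1 - z) / z) ^ μ) (Ioo 0 1) (Ioi 0) := fun _ hz =>
  rpow_pos_of_pos (div_pos (sub_pos.2 hz.2) hz.1) μ

theorem invOn_one_sub_div_rpow {μ : ℝ} (hμ : μ ≠ 0) :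
    InvOn (fun z : ℝ => ((1 - z) / z) ^ μ) (fun y => 1 / (1 + y ^ μ⁻¹)) (Ioi 0) (Ioo 0 1) := by
  constructor
  · intro y hy
    have hyr : 0 < y ^ μ⁻¹ := rpow_pos_of_pos hy _
    have hratio : (1 - 1 / (1 + y ^ μ⁻¹)) / (1 / (1 + y ^ μ⁻¹)) = y ^ μ⁻¹ := by
      field_simp [(by positivity : 1 + y ^ μ⁻¹ ≠ 0)]; ring
    simp only [hratio, rpow_inv_rpow (le_of_lt hy) hμ]
  · intro z hz
    have hodds : 0 < (1 - z) / z := div_pos (sub_pos.2 hz.2) hz.1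
    simp only [rpow_rpow_inv hodds.le hμ]
    field_simp [hz.1.ne']
    ring

theorem hasDerivAt_one_sub_div_rpow {μ z : ℝ} (hz : z ∈ Ioo (0 : ℝ) 1) :
    HasDerivAt (fun z => ((1 - z) / z) ^ μ) (-(μ * ((1 - z) / z) ^ μ / (z * (1 - z)))) z := by
  obtain ⟨hz0, hz1⟩ := hz
  have hodds : 0 < (1 - z) / z := div_pos (by linarith) hz0
  have hratio : HasDerivAt (fun z => (1 - z) / z) ((-1 * z - (1 - z) * 1) / z ^ 2) z :=
    ((hasDerivAt_id' z).const_sub 1).div (hasDerivAt_id' z) hz0.ne'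
  refine (hratio.rpow_const (p := μ) (Or.inl hodds.ne')).congr_deriv ?_
  rw [rpow_sub_one hodds.ne']
  field_simp
  ring

theorem jacobian_mul_density_eq {μ s c z t : ℝ} (hμ : μ ≠ 0) (hz : z ≠ 0) (h1z : 1 - z ≠ 0)
    (ht : t ≠ 0) :
    μ * t / (z * (1 - z)) * (s / (π * μ) * (1 / (t ^ 2 + 2 * t * c + 1))) =
      s / π * (1 / (z * (1 - z) * (t + t⁻¹ + 2 * c))) := by
  have hsum : t + t⁻¹ + 2 * c = (t ^ 2 + 2 * t * c + 1) / t := by field_simp; ring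
  rw [hsum, ← mul_div_assoc (z * (1 - z)), one_div_div]
  field_simp

theorem density_of_A_general
    {Ω : Type*} [MeasurableSpace Ω] (P : Measure Ω)
    (μ : ℝ) (hμ : μ ∈ Set.Ioo (0:ℝ) 1)
    (X : Ω → ℝ) (hX : Measurable X) (hXpos : ∀ ω, 0 ≤ X ω)
    (hlaw : P.map (fun ω => X ω ^ μ) =
      (volume.restrict (Set.Ici (0:ℝ))).withDensity
        (fun y => ENNReal.ofReal (Real.sin (π * μ) / (π * μ) *
          (1 / (y ^ 2 + 2 * y * Real.cos (π * μ) + 1))))) :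
    P.map (fun ω => 1 / (1 + X ω)) =
      (volume.restrict (Set.Ioo (0:ℝ) 1)).withDensity
        (fun z => ENNReal.ofReal (Real.sin (π * μ) / π *
          (1 / (z * (1 - z) *
            (((1 - z) / z) ^ μ + (z / (1 - z)) ^ μ + 2 * Real.cos (π * μ)))))) := by
  obtain ⟨hμpos, -⟩ := hμ
  have hμ0 : μ ≠ 0 := hμpos.ne'
  have hA : (fun ω => 1 / (1 + X ω)) = (fun y => 1 / (1 + y ^ μ⁻¹)) ∘ fun ω => X ω ^ μ :=
    funext fun ω => by simp only [Function.comp_apply, rpow_rpow_inv (hXpos ω) hμ0]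
  rw [hA, ← Measure.map_map (by fun_prop) (by fun_prop), hlaw, ← restrict_Ioi_eq_restrict_Ici,
    map_withDensity_eq_withDensity_abs_deriv (by fun_prop) measurableSet_Ioo
      (mapsTo_one_div_one_add_rpow _) (mapsTo_one_sub_div_rpow μ) (invOn_one_sub_div_rpow hμ0)
      fun z hz => (hasDerivAt_one_sub_div_rpow hz).hasDerivWithinAt]
  refine withDensity_congr_ae ((ae_restrict_iff' measurableSet_Ioo).2 (.of_forall fun z hz => ?_))
  obtain ⟨hz0, hz1⟩ := hz
  have hodds : 0 < (1 - z) / z := div_pos (sub_pos.2 hz1) hz0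
  have ht : 0 < ((1 - z) / z) ^ μ := rpow_pos_of_pos hodds μ
  have h1z : 0 < 1 - z := sub_pos.2 hz1
  dsimp only
  rw [abs_neg, abs_of_pos (by positivity), ← ENNReal.ofReal_mul (by positivity),
    jacobian_mul_density_eq hμ0 hz0.ne' h1z.ne' ht.ne', ← inv_rpow hodds.le, inv_div]

theorem density_of_A
    {Ω : Type*} [MeasurableSpace Ω] (P : Measure Ω) [IsProbabilityMeasure P]
    (μ : ℝ) (hμ : μ ∈ Set.Ioo (0:ℝ) 1)
    (X : Ω → ℝ) (hX : Measurable X) (hXpos : ∀ ω, 0 ≤ X ω)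
    (hlaw : P.map (fun ω => X ω ^ μ) =
      (volume.restrict (Set.Ici (0:ℝ))).withDensity
        (fun y => ENNReal.ofReal (Real.sin (π * μ) / (π * μ) *
          (1 / (y ^ 2 + 2 * y * Real.cos (π * μ) + 1))))) :
    P.map (fun ω => 1 / (1 + X ω)) =
      (volume.restrict (Set.Ioo (0:ℝ) 1)).withDensity
        (fun z => ENNReal.ofReal (Real.sin (π * μ) / π *
          (1 / (z * (1 - z) *
            (((1 - z) / z) ^ μ + (z / (1 - z)) ^ μ + 2 * Real.cos (π * μ)))))) :=
  density_of_A_general P μ hμ X hX hXpos hlaw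
end

section
/- For μ ∈ (0,1), the function z ↦ (sin(πμ)/π) · 1/( z(1-z)·[ ((1-z)/z)^μ + (z/(1-z))^μ + 2cos(πμ) ] ) is a probability density on (0,1). -/
/-!
Write `s = (z / (1 - z)) ^ μ`, which increases from `0` to `∞` on `(0, 1)`, and `θ = π μ`.
Since `s ^ 2 + 2 s cos θ + 1 = (s + cos θ) ^ 2 + sin θ ^ 2`, the integrand
`sin θ / (z (1 - z) (s⁻¹ + s + 2 cos θ))` is the derivative of
`arctan ((s + cos θ) / sin θ) / μ`, which rises from `arctan (cot θ) / μ = (π / 2 - θ) / μ`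
to `(π / 2) / μ`; so the integral is `θ / μ`, and dividing by `π` gives `1`.
Integrability on the open interval comes for free, the derivative being nonnegative.
-/

open MeasureTheory Real Set Filter Topology

theorem integral_Ioo_eq_sub_of_hasDerivAt_of_nonneg_of_tendsto {f f' : ℝ → ℝ} {a b fa fb : ℝ}
    (hab : a < b) (hderiv : ∀ x ∈ Ioo a b, HasDerivAt f (f' x) x)
    (hpos : ∀ x ∈ Ioo a b, 0 ≤ f' x)
    (ha : Tendsto f (𝓝[>] a) (𝓝 fa)) (hb : Tendsto f (𝓝[<] b) (𝓝 fb)) :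
    ∫ x in Ioo a b, f' x = fb - fa := by
  classical
  set F : ℝ → ℝ := Function.update (Function.update f a fa) b fb
  have hF : EqOn F f (Ioo a b) := fun x hx => by
    simp only [F, Function.update_of_ne hx.2.ne, Function.update_of_ne hx.1.ne']
  have hFderiv : ∀ x ∈ Ioo a b, HasDerivAt F (f' x) x := fun x hx =>
    (hderiv x hx).congr_of_eventuallyEq (eventuallyEq_of_mem (Ioo_mem_nhds hx.1 hx.2) hF)
  have hFcont : ContinuousOn F (Icc a b) := by
    rw [continuousOn_update_iff, continuousOn_update_iff, Icc_sdiff_right, Ico_sdiff_left]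
    refine ⟨⟨fun x hx => (hderiv x hx).continuousAt.continuousWithinAt, fun _ => ?_⟩, fun _ => ?_⟩
    · exact ha.mono_left (nhdsWithin_mono _ Ioo_subset_Ioi_self)
    · refine (hb.congr' ?_).mono_left (nhdsWithin_mono _ Ico_subset_Iio_self)
      filter_upwards [Ioo_mem_nhdsLT hab] with x hx
      exact (Function.update_of_ne hx.1.ne' _ _).symm
  have hint : IntervalIntegrable f' volume a b :=
    (intervalIntegrable_iff_integrableOn_Ioc_of_le hab.le).mpr
      (intervalIntegral.integrableOn_deriv_of_nonneg hFcont hFderiv hpos)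
  rw [← integral_Ioc_eq_integral_Ioo, ← intervalIntegral.integral_of_le hab.le]
  exact intervalIntegral.integral_eq_sub_of_hasDerivAt_of_tendsto hab hderiv hint ha hb

theorem Real.arctan_cos_div_sin {θ : ℝ} (h₀ : 0 < θ) (hπ : θ < π) :
    arctan (cos θ / sin θ) = π / 2 - θ := by
  rw [← inv_div, ← tan_eq_sin_div_cos, ← tan_pi_div_two_sub, arctan_tan] <;> linarith

theorem sq_add_two_mul_cos_mul_add_one_pos {θ : ℝ} (hθ : sin θ ≠ 0) (s : ℝ) :
    0 < s ^ 2 + 2 * cos θ * s + 1 := by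
  nlinarith [sin_sq_add_cos_sq θ, sq_nonneg (s + cos θ), sq_pos_of_ne_zero hθ]

theorem hasDerivAt_arctan_add_cos_div_sin {θ : ℝ} (hθ : sin θ ≠ 0) (s : ℝ) :
    HasDerivAt (fun s => arctan ((s + cos θ) / sin θ))
      (sin θ / (s ^ 2 + 2 * cos θ * s + 1)) s := by
  have hd : HasDerivAt (fun s => (s + cos θ) / sin θ) (1 / sin θ) s :=
    ((hasDerivAt_id s).add_const (cos θ)).div_const (sin θ)
  convert hd.arctan using 1
  have := sq_add_two_mul_cos_mul_add_one_pos hθ s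
  field_simp
  rw [div_eq_one_iff_eq (by nlinarith)]
  linear_combination sin_sq_add_cos_sq θ

theorem hasDerivAt_rpow_div_one_sub {z : ℝ} (hz : z ∈ Ioo 0 1) (μ : ℝ) :
    HasDerivAt (fun z => (z / (1 - z)) ^ μ) (μ * (z / (1 - z)) ^ μ / (z * (1 - z))) z := by
  obtain ⟨hz₀, hz₁⟩ := hz
  have h1z : 0 < 1 - z := by linarith
  have hodds : 0 < z / (1 - z) := div_pos hz₀ h1z
  have hd : HasDerivAt (fun z => z / (1 - z)) ((1 * (1 - z) - z * (-1)) / (1 - z) ^ 2) z :=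
    (hasDerivAt_id z).div ((hasDerivAt_id z).const_sub 1) h1z.ne'
  convert hd.rpow_const (p := μ) (Or.inl hodds.ne') using 1
  rw [rpow_sub_one hodds.ne']
  field_simp
  ring

theorem tendsto_div_one_sub_nhdsLT_one : Tendsto (fun z : ℝ => z / (1 - z)) (𝓝[<] 1) atTop := by
  have h : Tendsto (fun z : ℝ => 1 - z) (𝓝[<] 1) (𝓝[>] 0) := by
    refine tendsto_nhdsWithin_of_tendsto_nhds_of_eventually_within _ ?_ ?_
    · exact tendsto_nhdsWithin_of_tendsto_nhds
        (by simpa using (tendsto_id (x := 𝓝 (1 : ℝ))).const_sub 1)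
    · filter_upwards [self_mem_nhdsWithin] with z hz using sub_pos.2 (mem_Iio.1 hz)
  simpa [div_eq_mul_inv] using (tendsto_nhdsWithin_of_tendsto_nhds tendsto_id).pos_mul_atTop
    one_pos (tendsto_inv_nhdsGT_zero.comp h)

theorem inv_add_add_two_mul_cos_pos {θ s : ℝ} (hθ : sin θ ≠ 0) (hs : 0 < s) :
    0 < s⁻¹ + s + 2 * cos θ := by
  have hq := sq_add_two_mul_cos_mul_add_one_pos hθ s
  have : s⁻¹ + s + 2 * cos θ = (s ^ 2 + 2 * cos θ * s + 1) / s := by field_simp; ring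
  rw [this]
  positivity

theorem rpow_one_sub_div {z : ℝ} (hz : z ∈ Ioo 0 1) (μ : ℝ) :
    ((1 - z) / z) ^ μ = ((z / (1 - z)) ^ μ)⁻¹ := by
  rw [← inv_div, inv_rpow (div_pos hz.1 (sub_pos.2 hz.2)).le]

section

variable {μ θ : ℝ}

theorem hasDerivAt_arctan_rpow_div_one_sub (hμ : μ ≠ 0) (hθ : sin θ ≠ 0) {z : ℝ}
    (hz : z ∈ Ioo 0 1) :
    HasDerivAt (fun z => arctan (((z / (1 - z)) ^ μ + cos θ) / sin θ) / μ)
      (sin θ / (z * (1 - z) * (((1 - z) / z) ^ μ + (z / (1 - z)) ^ μ + 2 * cos θ))) z := by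
  have hs : 0 < (z / (1 - z)) ^ μ := rpow_pos_of_pos (div_pos hz.1 (sub_pos.2 hz.2)) μ
  have hq := sq_add_two_mul_cos_mul_add_one_pos hθ ((z / (1 - z)) ^ μ)
  have hz₀ := hz.1.ne'
  have hz₁ := (sub_pos.2 hz.2).ne'
  refine (((hasDerivAt_arctan_add_cos_div_sin hθ _).comp z
    (hasDerivAt_rpow_div_one_sub hz μ)).div_const μ).congr_deriv ?_
  rw [rpow_one_sub_div hz]
  field_simp
  ring

theorem tendsto_arctan_rpow_div_one_sub_nhdsGT_zero (hμ : 0 < μ) (hθ₀ : 0 < θ) (hθ : θ < π) :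
    Tendsto (fun z => arctan (((z / (1 - z)) ^ μ + cos θ) / sin θ) / μ) (𝓝[>] 0)
      (𝓝 ((π / 2 - θ) / μ)) := by
  refine tendsto_nhdsWithin_of_tendsto_nhds ?_
  have hcont : ContinuousAt (fun z : ℝ => (z / (1 - z)) ^ μ) 0 :=
    (continuousAt_id.div (continuousAt_const.sub continuousAt_id) (by norm_num)).rpow_const
      (Or.inr hμ.le)
  have hzero : arctan ((((0 : ℝ) / (1 - 0)) ^ μ + cos θ) / sin θ) / μ = (π / 2 - θ) / μ := by
    simp [zero_rpow hμ.ne', arctan_cos_div_sin hθ₀ hθ]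
  rw [← hzero]
  exact ((continuous_arctan.continuousAt.comp
    ((hcont.add (continuousAt_const (y := cos θ))).div_const (sin θ))).div_const μ).tendsto

theorem tendsto_arctan_rpow_div_one_sub_nhdsLT_one (hμ : 0 < μ) (hθ : 0 < sin θ) :
    Tendsto (fun z => arctan (((z / (1 - z)) ^ μ + cos θ) / sin θ) / μ) (𝓝[<] 1)
      (𝓝 (π / 2 / μ)) := by
  have h := (tendsto_rpow_atTop hμ).comp tendsto_div_one_sub_nhdsLT_one
  exact ((tendsto_arctan_atTop.mono_right nhdsWithin_le_nhds).comp
    ((tendsto_atTop_add_const_right _ (cos θ) h).atTop_div_const hθ)).div_const μ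

theorem integral_sin_div_rpow_div_one_sub (hμ : 0 < μ) (hθ₀ : 0 < θ) (hθ : θ < π) :
    ∫ z in Ioo (0 : ℝ) 1,
      sin θ / (z * (1 - z) * (((1 - z) / z) ^ μ + (z / (1 - z)) ^ μ + 2 * cos θ)) = θ / μ := by
  have hsin : 0 < sin θ := sin_pos_of_pos_of_lt_pi hθ₀ hθ
  have hpos : ∀ z ∈ Ioo (0 : ℝ) 1,
      0 ≤ sin θ / (z * (1 - z) * (((1 - z) / z) ^ μ + (z / (1 - z)) ^ μ + 2 * cos θ)) := by
    intro z hz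
    have hs : 0 < (z / (1 - z)) ^ μ := rpow_pos_of_pos (div_pos hz.1 (sub_pos.2 hz.2)) μ
    rw [rpow_one_sub_div hz]
    exact div_nonneg hsin.le (mul_pos (mul_pos hz.1 (sub_pos.2 hz.2))
      (inv_add_add_two_mul_cos_pos hsin.ne' hs)).le
  rw [integral_Ioo_eq_sub_of_hasDerivAt_of_nonneg_of_tendsto zero_lt_one
    (fun z hz => hasDerivAt_arctan_rpow_div_one_sub hμ.ne' hsin.ne' hz) hpos
    (tendsto_arctan_rpow_div_one_sub_nhdsGT_zero hμ hθ₀ hθ)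
    (tendsto_arctan_rpow_div_one_sub_nhdsLT_one hμ hsin)]
  ring

end

theorem A_density_integrates_to_one
    (μ : ℝ) (hμ : μ ∈ Set.Ioo (0:ℝ) 1) :
    ∫ z in Set.Ioo (0:ℝ) 1,
      Real.sin (π * μ) / π *
        (1 / (z * (1 - z) *
          (((1 - z) / z) ^ μ + (z / (1 - z)) ^ μ + 2 * Real.cos (π * μ)))) = 1 := by
  obtain ⟨hμ₀, hμ₁⟩ := hμ
  calc _ = 1 / π * ∫ z in Ioo (0 : ℝ) 1, sin (π * μ) /
          (z * (1 - z) * (((1 - z) / z) ^ μ + (z / (1 - z)) ^ μ + 2 * cos (π * μ))) := by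
        rw [← integral_const_mul]
        congr 1 with z
        ring
    _ = 1 := by
        rw [integral_sin_div_rpow_div_one_sub hμ₀ (by positivity) (by nlinarith [pi_pos])]
        field_simp
end

section
/- Let C be a standard Cauchy random variable and n ≥ 2 an integer. Then the random variable A = 1/(1 + (n-1)²C²) has density z ↦ (1/π) · 1/( √z · √(1-z) · [ (n-1)z + (1-z)/(n-1) ] ) on (0,1). -/
open MeasureTheory Real Set
open scoped ENNReal

/-!
Write `A = g C` with `g x = 1 / (1 + b² x²)` and `b = n - 1`. Since both `g` and the Cauchy
density are even, the law of `A` only sees `C` on `(0, ∞)`, with doubled density. There `g` is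
a decreasing bijection onto `(0, 1)`, and the substitution `z = g x` turns the claimed density
into the Cauchy one because `|g' x|` times the claimed density at `g x` is `2 / (π (1 + x²))`.
-/

theorem Function.Even.lintegral_eq_two_mul_setLIntegral_Ioi {f : ℝ → ℝ≥0∞} (hf : f.Even) :
    ∫⁻ x, f x = 2 * ∫⁻ x in Ioi 0, f x := by
  have hIic : ∫⁻ x in Iic 0, f x = ∫⁻ x in Ioi 0, f x := calc
    ∫⁻ x in Iic 0, f x = ∫⁻ x in Neg.neg ⁻¹' Ici 0, f (-x) := by
        rw [neg_preimage, neg_Ici, neg_zero]; simp only [hf.eq]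
    _ = ∫⁻ x in Ici 0, f x :=
      (Measure.measurePreserving_neg volume).setLIntegral_comp_preimage_emb
        (MeasurableEquiv.neg ℝ).measurableEmbedding f _
    _ = ∫⁻ x in Ioi 0, f x := setLIntegral_congr Ioi_ae_eq_Ici.symm
  rw [← lintegral_add_compl f measurableSet_Iic, compl_Iic, hIic, two_mul]

section

variable {b : ℝ}

theorem hasDerivAt_one_div_one_add_sq_mul_sq (b x : ℝ) :
    HasDerivAt (fun x => 1 / (1 + b ^ 2 * x ^ 2))
      (-(2 * b ^ 2 * x) / (1 + b ^ 2 * x ^ 2) ^ 2) x := by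
  have h := (((hasDerivAt_pow 2 x).const_mul (b ^ 2)).const_add 1).fun_inv (by positivity)
  simp only [one_div]
  exact h.congr_deriv (by norm_num; ring)

theorem strictAntiOn_one_div_one_add_sq_mul_sq (hb : b ≠ 0) :
    StrictAntiOn (fun x => 1 / (1 + b ^ 2 * x ^ 2)) (Ici 0) := by
  intro x hx y _ hxy
  have : x ^ 2 < y ^ 2 := pow_lt_pow_left₀ hxy hx two_ne_zero
  have : 0 < b ^ 2 := by positivity
  simp only
  gcongr

theorem image_one_div_one_add_sq_mul_sq_Ioi (hb : 0 < b) :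
    (fun x => 1 / (1 + b ^ 2 * x ^ 2)) '' Ioi 0 = Ioo 0 1 := by
  ext z
  constructor
  · rintro ⟨x, hx, rfl⟩
    have : 0 < b ^ 2 * x ^ 2 := by have : 0 < x := hx; positivity
    exact ⟨by positivity, by rw [div_lt_one (by positivity)]; linarith⟩
  · rintro ⟨hz0, hz1⟩
    have : 0 < 1 - z := sub_pos.2 hz1
    refine ⟨√(1 - z) / (b * √z), by simp only [mem_Ioi]; positivity, ?_⟩
    have hs0 : √z ^ 2 = z := sq_sqrt hz0.le
    have hs1 : √(1 - z) ^ 2 = 1 - z := sq_sqrt this.le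
    have : √z ≠ 0 := by positivity
    simp only [div_pow, mul_pow, hs0, hs1]
    field_simp
    ring

theorem sqrt_one_div_one_add_sq_mul_sq_mul_sqrt_one_sub (b x : ℝ) :
    √(1 / (1 + b ^ 2 * x ^ 2)) * √(1 - 1 / (1 + b ^ 2 * x ^ 2)) =
      |b * x| / (1 + b ^ 2 * x ^ 2) := by
  have h : 0 < 1 + b ^ 2 * x ^ 2 := by positivity
  rw [← sqrt_mul (by positivity), ← sqrt_sq (by positivity : 0 ≤ |b * x| / (1 + b ^ 2 * x ^ 2))]
  congr 1
  rw [div_pow, sq_abs]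
  field_simp
  ring

theorem abs_deriv_mul_density_comp_eq_two_mul_cauchy_density (hb : 0 < b) {x : ℝ} (hx : 0 < x) :
    |-(2 * b ^ 2 * x) / (1 + b ^ 2 * x ^ 2) ^ 2| *
        ((1 / π) * (1 / (√(1 / (1 + b ^ 2 * x ^ 2)) * √(1 - 1 / (1 + b ^ 2 * x ^ 2)) *
          (b * (1 / (1 + b ^ 2 * x ^ 2)) + (1 - 1 / (1 + b ^ 2 * x ^ 2)) / b)))) =
      2 * (1 / (π * (1 + x ^ 2))) := by
  rw [sqrt_one_div_one_add_sq_mul_sq_mul_sqrt_one_sub, abs_of_pos (mul_pos hb hx),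
    abs_div, abs_neg, abs_of_pos (by positivity), abs_of_pos (by positivity)]
  have hq : 0 < 1 + b ^ 2 * x ^ 2 := by positivity
  rw [show b * (1 / (1 + b ^ 2 * x ^ 2)) + (1 - 1 / (1 + b ^ 2 * x ^ 2)) / b =
      b * (1 + x ^ 2) / (1 + b ^ 2 * x ^ 2) by field_simp; ring]
  have := pi_pos
  field_simp

theorem map_withDensity_cauchy_one_div_one_add_sq_mul_sq (hb : 0 < b) :
    (volume.withDensity fun x => ENNReal.ofReal (1 / (π * (1 + x ^ 2)))).map
        (fun x => 1 / (1 + b ^ 2 * x ^ 2)) =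
      (volume.restrict (Ioo 0 1)).withDensity fun z =>
        ENNReal.ofReal ((1 / π) * (1 / (√z * √(1 - z) * (b * z + (1 - z) / b)))) := by
  set g : ℝ → ℝ := fun x => 1 / (1 + b ^ 2 * x ^ 2)
  set ρ : ℝ → ℝ≥0∞ := fun x => ENNReal.ofReal (1 / (π * (1 + x ^ 2)))
  set d : ℝ → ℝ≥0∞ := fun z =>
    ENNReal.ofReal ((1 / π) * (1 / (√z * √(1 - z) * (b * z + (1 - z) / b))))
  have hg : Measurable g := by fun_prop
  ext t ht
  have heven : Function.Even ((g ⁻¹' t).indicator ρ) := fun x => by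
    have hg_neg : g (-x) = g x := by simp only [g, even_two.neg_pow]
    have hρ_neg : ρ (-x) = ρ x := by simp only [ρ, even_two.neg_pow]
    classical
    rw [indicator_apply, indicator_apply, mem_preimage, mem_preimage, hg_neg, hρ_neg]
  calc _ = ∫⁻ x, (g ⁻¹' t).indicator ρ x := by
        rw [Measure.map_apply hg ht, withDensity_apply _ (hg ht), lintegral_indicator (hg ht)]
    _ = 2 * ∫⁻ x in Ioi 0, (g ⁻¹' t).indicator ρ x :=
        heven.lintegral_eq_two_mul_setLIntegral_Ioi
    _ = ∫⁻ x in Ioi 0, ENNReal.ofReal |-(2 * b ^ 2 * x) / (1 + b ^ 2 * x ^ 2) ^ 2| *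
          t.indicator d (g x) := by
        rw [← lintegral_const_mul' _ _ ENNReal.ofNat_ne_top]
        refine setLIntegral_congr_fun measurableSet_Ioi fun x hx => ?_
        by_cases hxt : g x ∈ t
        · rw [indicator_of_mem (show x ∈ g ⁻¹' t from hxt), indicator_of_mem hxt,
            ← ENNReal.ofReal_mul (abs_nonneg _),
            abs_deriv_mul_density_comp_eq_two_mul_cauchy_density hb hx,
            ENNReal.ofReal_mul zero_le_two, ENNReal.ofReal_ofNat]
        · rw [indicator_of_notMem (show x ∉ g ⁻¹' t from hxt), indicator_of_notMem hxt,
            mul_zero, mul_zero]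
    _ = ∫⁻ z in g '' Ioi 0, t.indicator d z :=
        (lintegral_image_eq_lintegral_abs_deriv_mul measurableSet_Ioi
          (fun x _ => (hasDerivAt_one_div_one_add_sq_mul_sq b x).hasDerivWithinAt)
          ((strictAntiOn_one_div_one_add_sq_mul_sq hb.ne').injOn.mono Ioi_subset_Ici_self)
          _).symm
    _ = _ := by
        rw [image_one_div_one_add_sq_mul_sq_Ioi hb, withDensity_apply _ ht,
          lintegral_indicator ht]

end

theorem density_of_A_n_general
    {Ω : Type*} [MeasurableSpace Ω] (P : Measure Ω)
    (C : Ω → ℝ) (hC : Measurable C)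
    (hClaw : P.map C = volume.withDensity (fun x => ENNReal.ofReal (1 / (π * (1 + x ^ 2)))))
    (n : ℕ) (hn : 2 ≤ n) :
    P.map (fun ω => 1 / (1 + ((n : ℝ) - 1) ^ 2 * C ω ^ 2)) =
      (volume.restrict (Set.Ioo (0:ℝ) 1)).withDensity
        (fun z => ENNReal.ofReal ((1 / π) *
          (1 / (Real.sqrt z * Real.sqrt (1 - z) *
            (((n : ℝ) - 1) * z + (1 - z) / ((n : ℝ) - 1)))))) := by
  have hb : (0 : ℝ) < n - 1 := by
    have : (2 : ℝ) ≤ n := by exact_mod_cast hn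
    linarith
  rw [← map_withDensity_cauchy_one_div_one_add_sq_mul_sq hb, ← hClaw,
    Measure.map_map (by fun_prop) hC]
  rfl

theorem density_of_A_n
    {Ω : Type*} [MeasurableSpace Ω] (P : Measure Ω) [IsProbabilityMeasure P]
    (C : Ω → ℝ) (hC : Measurable C)
    (hClaw : P.map C = volume.withDensity (fun x => ENNReal.ofReal (1 / (π * (1 + x ^ 2)))))
    (n : ℕ) (hn : 2 ≤ n) :
    P.map (fun ω => 1 / (1 + ((n : ℝ) - 1) ^ 2 * C ω ^ 2)) =
      (volume.restrict (Set.Ioo (0:ℝ) 1)).withDensity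
        (fun z => ENNReal.ofReal ((1 / π) *
          (1 / (Real.sqrt z * Real.sqrt (1 - z) *
            (((n : ℝ) - 1) * z + (1 - z) / ((n : ℝ) - 1)))))) :=
  density_of_A_n_general P C hC hClaw n hn
end

section
/- For every integer n ≥ 2, the function z ↦ (1/π) · 1/( √z · √(1-z) · [ (n-1)z + (1-z)/(n-1) ] ) is a probability density on (0,1), i.e., integrates to 1. -/
/-!
The substitution `u = c √(z / (1 - z))`, with `c = n - 1`, maps `(0, 1)` increasingly onto
`(0, ∞)` and turns `dz / (√z √(1 - z) (c z + (1 - z) / c))` into `2 du / (1 + u²)`, whose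
integral is `2 · π / 2 = π`.
-/

open MeasureTheory Real Set

noncomputable def oddsRoot (c z : ℝ) : ℝ := c * (√z / √(1 - z))

lemma oddsRoot_sq (c : ℝ) {z : ℝ} (hz : z ∈ Ioo 0 1) :
    oddsRoot c z ^ 2 = c ^ 2 * z / (1 - z) := by
  rw [oddsRoot, mul_pow, div_pow, sq_sqrt hz.1.le, sq_sqrt (sub_nonneg.2 hz.2.le), mul_div_assoc]

lemma strictMonoOn_oddsRoot {c : ℝ} (hc : 0 < c) : StrictMonoOn (oddsRoot c) (Ioo 0 1) := by
  rintro z ⟨hz0, hz1⟩ w ⟨hw0, hw1⟩ hzw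
  have hcross : √z * √(1 - w) < √w * √(1 - z) := by
    rw [← sqrt_mul hz0.le, ← sqrt_mul hw0.le]
    exact sqrt_lt_sqrt (by nlinarith) (by nlinarith)
  have hratio : √z / √(1 - z) < √w / √(1 - w) := by
    rwa [div_lt_div_iff₀ (sqrt_pos.2 (by linarith)) (sqrt_pos.2 (by linarith))]
  exact mul_lt_mul_of_pos_left hratio hc

lemma oddsRoot_image_Ioo {c : ℝ} (hc : 0 < c) : oddsRoot c '' Ioo 0 1 = Ioi 0 := by
  refine Subset.antisymm ?_ fun u (hu : 0 < u) => ?_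
  · rintro _ ⟨z, ⟨hz0, hz1⟩, rfl⟩
    exact mul_pos hc (div_pos (sqrt_pos.2 hz0) (sqrt_pos.2 (sub_pos.2 hz1)))
  · have hd : 0 < c ^ 2 + u ^ 2 := by positivity
    have hlt : u ^ 2 / (c ^ 2 + u ^ 2) < 1 := (div_lt_one hd).2 (by nlinarith)
    refine ⟨u ^ 2 / (c ^ 2 + u ^ 2), ⟨by positivity, hlt⟩, ?_⟩
    have hodds : u ^ 2 / (c ^ 2 + u ^ 2) / (1 - u ^ 2 / (c ^ 2 + u ^ 2)) = (u / c) ^ 2 := by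
      field_simp
      ring
    rw [oddsRoot, ← sqrt_div' _ (sub_pos.2 hlt).le, hodds, sqrt_sq (div_pos hu hc).le,
      mul_div_cancel₀ _ hc.ne']

lemma hasDerivAt_oddsRoot (c : ℝ) {z : ℝ} (hz : z ∈ Ioo 0 1) :
    HasDerivAt (oddsRoot c) (c / (2 * √z * √(1 - z) * (1 - z))) z := by
  obtain ⟨hz0, hz1⟩ := hz
  have h1z : 0 < 1 - z := sub_pos.2 hz1
  have hnum := hasDerivAt_sqrt hz0.ne'
  have hden : HasDerivAt (fun x => √(1 - x)) (1 / (2 * √(1 - z)) * -1) z :=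
    (hasDerivAt_sqrt h1z.ne').comp z ((hasDerivAt_id z).const_sub 1)
  refine ((hnum.div hden (sqrt_pos.2 h1z).ne').const_mul c).congr_deriv ?_
  field_simp
  rw [sq_sqrt hz0.le, sq_sqrt h1z.le]
  ring

lemma abs_deriv_oddsRoot_mul {c z : ℝ} (hc : 0 < c) (hz : z ∈ Ioo 0 1) :
    |c / (2 * √z * √(1 - z) * (1 - z))| • (2 * (1 + oddsRoot c z ^ 2)⁻¹) =
      1 / (√z * √(1 - z) * (c * z + (1 - z) / c)) := by
  obtain ⟨hz0, hz1⟩ := hz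
  have h1z : 0 < 1 - z := sub_pos.2 hz1
  have hsz := sqrt_pos.2 hz0
  have hsw := sqrt_pos.2 h1z
  rw [abs_of_pos (by positivity), smul_eq_mul, oddsRoot_sq c ⟨hz0, hz1⟩]
  field_simp
  ring

theorem integral_Ioo_one_div_sqrt_mul_sqrt_mul_eq_pi {c : ℝ} (hc : 0 < c) :
    ∫ z in Ioo (0 : ℝ) 1, 1 / (√z * √(1 - z) * (c * z + (1 - z) / c)) = π := by
  have hsubst := integral_image_eq_integral_abs_deriv_smul measurableSet_Ioo
    (fun z hz => (hasDerivAt_oddsRoot c hz).hasDerivWithinAt)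
    (strictMonoOn_oddsRoot hc).injOn fun u => 2 * (1 + u ^ 2)⁻¹
  rw [oddsRoot_image_Ioo hc, integral_const_mul, integral_Ioi_inv_one_add_sq, arctan_zero,
    setIntegral_congr_fun measurableSet_Ioo fun z hz => abs_deriv_oddsRoot_mul hc hz] at hsubst
  linarith

theorem A_n_density_integrates_to_one (n : ℕ) (hn : 2 ≤ n) :
    ∫ z in Set.Ioo (0:ℝ) 1,
      (1 / π) * (1 / (Real.sqrt z * Real.sqrt (1 - z) *
        (((n : ℝ) - 1) * z + (1 - z) / ((n : ℝ) - 1)))) = 1 := by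
  have hc : (0 : ℝ) < n - 1 := sub_pos.2 (Nat.one_lt_cast.2 hn)
  rw [integral_const_mul, integral_Ioo_one_div_sqrt_mul_sqrt_mul_eq_pi hc,
    one_div_mul_cancel pi_ne_zero]
end

section
/- Let T₁, T₂ be independent one-sided stable(1/2) variables with density t ↦ (2πt³)^{-1/2} e^{-1/(2t)} on (0,∞), and let c > 0. Then T₁/(T₁ + c²T₂) has the same distribution as 1/(1 + c²C²), where C is standard Cauchy. -/
/-!
The ratio `T₂ / T₁` of two independent Lévy variables and the square `C²` of a standard Cauchy
variable have the same law, with density `1 / (π √r (1 + r))` on `(0, ∞)`. Since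
`T₁ / (T₁ + c² T₂) = g (T₂ / T₁)` and `1 / (1 + c² C²) = g (C²)` for `g r = 1 / (1 + c² r)`,
the two laws in the theorem are images of this one law under `g`.
The density of `T₂ / T₁` is `r ↦ ∫ s f(s) f(s r) ds`, which the substitution `s ↦ 1 / s` turns
into an exponential integral; the density of `C²` comes from the substitution `x = ±√r`.
-/

open MeasureTheory ProbabilityTheory Real Set
open scoped ENNReal

lemma setLIntegral_Ioi_zero_eq_comp_mul_left {s : ℝ} (hs : 0 < s) (G : ℝ → ℝ≥0∞) :
    ∫⁻ t in Ioi 0, G t = ∫⁻ r in Ioi 0, ENNReal.ofReal s * G (s * r) := by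
  have h := lintegral_image_eq_lintegral_abs_deriv_mul (s := Ioi 0) measurableSet_Ioi
    (fun r _ => ((hasDerivAt_id r).const_mul s).hasDerivWithinAt)
    (mul_right_injective₀ hs.ne').injOn G
  simpa only [image_mul_left_Ioi hs, mul_zero, mul_one, abs_of_pos hs, id] using h

lemma image_sqrt_Ioi_zero : Real.sqrt '' Ioi 0 = Ioi 0 := by
  ext x
  refine ⟨?_, fun hx => ⟨x ^ 2, pow_pos (mem_Ioi.mp hx) 2, Real.sqrt_sq (le_of_lt hx)⟩⟩
  rintro ⟨r, hr, rfl⟩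
  exact Real.sqrt_pos.mpr hr

lemma setLIntegral_Ioi_zero_eq_comp_sqrt (G : ℝ → ℝ≥0∞) :
    ∫⁻ x in Ioi 0, G x = ∫⁻ r in Ioi 0, ENNReal.ofReal (1 / (2 * √r)) * G √r := by
  have h := lintegral_image_eq_lintegral_abs_deriv_mul measurableSet_Ioi
    (fun r hr => (Real.hasDerivAt_sqrt (ne_of_gt hr)).hasDerivWithinAt)
    (fun a ha b hb hab => (Real.sqrt_inj (le_of_lt ha) (le_of_lt hb)).mp hab) G
  rw [image_sqrt_Ioi_zero] at h
  rw [h]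
  refine setLIntegral_congr_fun measurableSet_Ioi fun r (hr : 0 < r) => ?_
  rw [abs_of_pos (by positivity)]

lemma setLIntegral_Iio_zero_eq_comp_neg_sqrt (G : ℝ → ℝ≥0∞) :
    ∫⁻ x in Iio 0, G x = ∫⁻ r in Ioi 0, ENNReal.ofReal (1 / (2 * √r)) * G (-√r) := by
  have h := lintegral_image_eq_lintegral_abs_deriv_mul (f := fun r => -√r) measurableSet_Ioi
    (fun r hr => (Real.hasDerivAt_sqrt (ne_of_gt hr)).neg.hasDerivWithinAt)
    (fun a ha b hb hab => (Real.sqrt_inj (le_of_lt ha) (le_of_lt hb)).mp (neg_inj.mp hab)) G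
  have himg : (fun r : ℝ => -√r) '' Ioi 0 = Iio 0 := by
    rw [show (fun r : ℝ => -√r) = Neg.neg ∘ Real.sqrt from rfl, image_comp, image_sqrt_Ioi_zero,
      image_neg_Ioi, neg_zero]
  rw [← himg, h]
  refine setLIntegral_congr_fun measurableSet_Ioi fun r (hr : 0 < r) => ?_
  rw [abs_neg, abs_of_pos (by positivity)]

lemma setLIntegral_Ioi_zero_eq_comp_inv (G : ℝ → ℝ≥0∞) :
    ∫⁻ s in Ioi 0, G s = ∫⁻ w in Ioi 0, ENNReal.ofReal (w ^ 2)⁻¹ * G w⁻¹ := by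
  have h := lintegral_image_eq_lintegral_abs_deriv_mul measurableSet_Ioi
    (fun w hw => (hasDerivAt_inv (ne_of_gt hw)).hasDerivWithinAt) inv_injective.injOn G
  have himg : Inv.inv '' Ioi (0:ℝ) = Ioi 0 := by
    rw [image_eq_preimage_of_inverse inv_inv inv_inv]
    ext; simp
  simpa only [himg, abs_neg, abs_inv, abs_pow, sq_abs] using h

lemma map_div_prod_withDensity {f g : ℝ → ℝ≥0∞} (hf : Measurable f) (hg : Measurable g) :
    (((volume.restrict (Ioi (0:ℝ))).withDensity f).prod
        ((volume.restrict (Ioi (0:ℝ))).withDensity g)).map (fun p => p.2 / p.1) =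
      (volume.restrict (Ioi 0)).withDensity
        (fun r => ∫⁻ s in Ioi 0, ENNReal.ofReal s * f s * g (s * r)) := by
  have hF : Measurable (Function.uncurry fun s r : ℝ => ENNReal.ofReal s * f s * g (s * r)) := by
    fun_prop
  have hdensity : Measurable fun r => ∫⁻ s in Ioi 0, ENNReal.ofReal s * f s * g (s * r) :=
    hF.lintegral_prod_left'
  refine Measure.ext_of_lintegral _ fun φ hφ => ?_
  have hinner : ∀ s ∈ Ioi (0:ℝ),
      ∫⁻ t, φ (t / s) ∂(volume.restrict (Ioi 0)).withDensity g =
        ∫⁻ r in Ioi 0, ENNReal.ofReal s * g (s * r) * φ r := by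
    intro s hs
    rw [lintegral_withDensity_eq_lintegral_mul _ hg (by fun_prop),
      setLIntegral_Ioi_zero_eq_comp_mul_left hs]
    refine lintegral_congr fun r => ?_
    simp only [Pi.mul_apply, mul_div_cancel_left₀ r (ne_of_gt hs), mul_assoc]
  have hmeas : Measurable fun s => ∫⁻ t, φ (t / s) ∂(volume.restrict (Ioi 0)).withDensity g :=
    Measurable.lintegral_prod_right' (f := fun p : ℝ × ℝ => φ (p.2 / p.1)) (by fun_prop)
  rw [lintegral_map hφ (by fun_prop), lintegral_prod _ (by fun_prop)]
  dsimp only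
  rw [lintegral_withDensity_eq_lintegral_mul _ hf hmeas,
    lintegral_withDensity_eq_lintegral_mul _ hdensity hφ,
    setLIntegral_congr_fun measurableSet_Ioi fun s hs => by
      rw [Pi.mul_apply, hinner s hs, ← lintegral_const_mul _ (by fun_prop)],
    lintegral_lintegral_swap (by fun_prop)]
  refine lintegral_congr fun r => ?_
  rw [Pi.mul_apply, ← lintegral_mul_const _ (by fun_prop)]
  refine lintegral_congr fun s => ?_
  ring

lemma map_sq_withDensity {ρ : ℝ → ℝ≥0∞} (hρ : Measurable ρ) :
    (volume.withDensity ρ).map (· ^ 2) =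
      (volume.restrict (Ioi 0)).withDensity
        (fun r => ENNReal.ofReal (1 / (2 * √r)) * (ρ √r + ρ (-√r))) := by
  refine Measure.ext_of_lintegral _ fun φ hφ => ?_
  rw [lintegral_map hφ (by fun_prop),
    lintegral_withDensity_eq_lintegral_mul _ hρ (by fun_prop),
    ← lintegral_add_compl _ measurableSet_Iio, compl_Iio, ← setLIntegral_congr Ioi_ae_eq_Ici,
    setLIntegral_Iio_zero_eq_comp_neg_sqrt,
    setLIntegral_Ioi_zero_eq_comp_sqrt (ρ * fun a => φ (a ^ 2)),
    ← lintegral_add_left (by fun_prop), lintegral_withDensity_eq_lintegral_mul _ (by fun_prop) hφ]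
  refine setLIntegral_congr_fun measurableSet_Ioi fun r hr => ?_
  simp only [Pi.mul_apply, neg_sq, Real.sq_sqrt (le_of_lt hr)]
  ring

lemma lintegral_exp_neg_mul_Ioi_zero {a : ℝ} (ha : 0 < a) :
    ∫⁻ w in Ioi 0, ENNReal.ofReal (exp (-a * w)) = ENNReal.ofReal a⁻¹ := by
  rw [← ofReal_integral_eq_lintegral_ofReal (integrableOn_exp_mul_Ioi (neg_lt_zero.mpr ha) 0)
    (ae_of_all _ fun w => (exp_pos _).le), integral_exp_mul_Ioi (neg_lt_zero.mpr ha),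
    mul_zero, exp_zero, neg_div, div_neg, neg_neg, one_div]

lemma lintegral_inv_sq_mul_exp_neg_div {a : ℝ} (ha : 0 < a) :
    ∫⁻ s in Ioi 0, ENNReal.ofReal ((s ^ 2)⁻¹ * exp (-(a / s))) = ENNReal.ofReal a⁻¹ := by
  rw [setLIntegral_Ioi_zero_eq_comp_inv, ← lintegral_exp_neg_mul_Ioi_zero ha]
  refine setLIntegral_congr_fun measurableSet_Ioi fun w hw => ?_
  rw [← ENNReal.ofReal_mul (by positivity), inv_pow, inv_inv, div_inv_eq_mul,
    inv_mul_cancel_left₀ (pow_ne_zero 2 (ne_of_gt hw)), neg_mul]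

noncomputable def levyPDFReal (t : ℝ) : ℝ := (2 * π * t ^ 3) ^ (-(1:ℝ)/2) * exp (-1 / (2 * t))

noncomputable def sqCauchyPDFReal (r : ℝ) : ℝ := 1 / (π * √r * (1 + r))

lemma levyPDFReal_of_pos {t : ℝ} (ht : 0 < t) :
    levyPDFReal t = exp (-1 / (2 * t)) / (t * √(2 * π * t)) := by
  have hpow : (2 * π * t ^ 3) ^ (-(1:ℝ)/2) = (t * √(2 * π * t))⁻¹ := by
    rw [neg_div, rpow_neg (by positivity), ← sqrt_eq_rpow,
      show 2 * π * t ^ 3 = t ^ 2 * (2 * π * t) by ring, sqrt_mul (by positivity),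
      sqrt_sq ht.le]
  rw [levyPDFReal, hpow, inv_mul_eq_div]

lemma levyPDFReal_pos {t : ℝ} (ht : 0 < t) : 0 < levyPDFReal t := by
  rw [levyPDFReal_of_pos ht]
  positivity

lemma mul_levyPDFReal_mul_levyPDFReal {s r : ℝ} (hs : 0 < s) (hr : 0 < r) :
    s * levyPDFReal s * levyPDFReal (s * r) =
      (2 * π * r * √r)⁻¹ * ((s ^ 2)⁻¹ * exp (-((1 + r) / (2 * r) / s))) := by
  have hsqrt : √(2 * π * s) * √(2 * π * (s * r)) = 2 * π * s * √r := by
    rw [← sqrt_mul (by positivity),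
      show 2 * π * s * (2 * π * (s * r)) = (2 * π * s) ^ 2 * r by ring,
      sqrt_mul (by positivity), sqrt_sq (by positivity)]
  have hexp : exp (-1 / (2 * s)) * exp (-1 / (2 * (s * r))) = exp (-((1 + r) / (2 * r) / s)) := by
    rw [← exp_add]
    congr 1
    field_simp
    ring
  have hquot : s * levyPDFReal s * levyPDFReal (s * r) = exp (-1 / (2 * s)) *
      exp (-1 / (2 * (s * r))) / (s * r * (√(2 * π * s) * √(2 * π * (s * r)))) := by
    rw [levyPDFReal_of_pos hs, levyPDFReal_of_pos (mul_pos hs hr)]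
    field_simp
  have hsqrt_pos : 0 < √r := sqrt_pos.mpr hr
  rw [hquot, hsqrt, hexp]
  field_simp

lemma lintegral_levyPDFReal_ratio_eq_sqCauchyPDFReal {r : ℝ} (hr : 0 < r) :
    ∫⁻ s in Ioi 0, ENNReal.ofReal s * ENNReal.ofReal (levyPDFReal s) *
      ENNReal.ofReal (levyPDFReal (s * r)) = ENNReal.ofReal (sqCauchyPDFReal r) := by
  have ha : 0 < (1 + r) / (2 * r) := by positivity
  rw [setLIntegral_congr_fun measurableSet_Ioi fun s hs => by
      rw [← ENNReal.ofReal_mul hs.le, ← ENNReal.ofReal_mul (mul_pos hs (levyPDFReal_pos hs)).le,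
        mul_levyPDFReal_mul_levyPDFReal hs hr, ENNReal.ofReal_mul (by positivity)],
    lintegral_const_mul _ (by fun_prop), lintegral_inv_sq_mul_exp_neg_div ha,
    ← ENNReal.ofReal_mul (by positivity), sqCauchyPDFReal]
  congr 1
  have hsqrt_pos : 0 < √r := sqrt_pos.mpr hr
  field_simp

noncomputable def levyMeasure : Measure ℝ :=
  (volume.restrict (Ioi 0)).withDensity fun t => ENNReal.ofReal (levyPDFReal t)

noncomputable def sqCauchyMeasure : Measure ℝ :=
  (volume.restrict (Ioi 0)).withDensity fun r => ENNReal.ofReal (sqCauchyPDFReal r)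

lemma map_div_prod_levyMeasure :
    (levyMeasure.prod levyMeasure).map (fun p => p.2 / p.1) = sqCauchyMeasure := by
  rw [levyMeasure, map_div_prod_withDensity (by unfold levyPDFReal; fun_prop)
    (by unfold levyPDFReal; fun_prop)]
  exact withDensity_congr_ae (ae_restrict_of_forall_mem measurableSet_Ioi
    fun r hr => lintegral_levyPDFReal_ratio_eq_sqCauchyPDFReal hr)

lemma map_sq_cauchy_eq_sqCauchyMeasure :
    (volume.withDensity fun x => ENNReal.ofReal (1 / (π * (1 + x ^ 2)))).map (· ^ 2) =
      sqCauchyMeasure := by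
  rw [map_sq_withDensity (by fun_prop)]
  refine withDensity_congr_ae (ae_restrict_of_forall_mem measurableSet_Ioi fun r hr => ?_)
  have hsqrt_pos : 0 < √r := sqrt_pos.mpr hr
  dsimp only
  rw [neg_sq, ← ENNReal.ofReal_add (by positivity) (by positivity),
    ← ENNReal.ofReal_mul (by positivity), sqCauchyPDFReal, sq_sqrt hr.le]
  congr 1
  field_simp
  ring

lemma ae_pos_of_map_eq_withDensity_Ioi {Ω : Type*} [MeasurableSpace Ω] {P : Measure Ω}
    {T : Ω → ℝ} (hT : Measurable T) {f : ℝ → ℝ≥0∞}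
    (hlaw : P.map T = (volume.restrict (Ioi 0)).withDensity f) : ∀ᵐ ω ∂P, 0 < T ω := by
  refine ae_of_ae_map hT.aemeasurable ?_
  rw [hlaw]
  exact (withDensity_absolutelyContinuous _ _).ae_le (ae_restrict_mem measurableSet_Ioi)

theorem stable_half_ratio_eq_cauchy_law_general
    {Ω : Type*} [MeasurableSpace Ω] (P : Measure Ω) [IsProbabilityMeasure P]
    {Ω' : Type*} [MeasurableSpace Ω'] (P' : Measure Ω')
    (T₁ T₂ : Ω → ℝ) (hT₁ : Measurable T₁) (hT₂ : Measurable T₂)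
    (hlaw₁ : P.map T₁ = (volume.restrict (Set.Ioi (0:ℝ))).withDensity
      (fun t => ENNReal.ofReal ((2 * π * t ^ 3) ^ (-(1:ℝ)/2) * Real.exp (-1 / (2 * t)))))
    (hlaw₂ : P.map T₂ = (volume.restrict (Set.Ioi (0:ℝ))).withDensity
      (fun t => ENNReal.ofReal ((2 * π * t ^ 3) ^ (-(1:ℝ)/2) * Real.exp (-1 / (2 * t)))))
    (hindep : IndepFun T₁ T₂ P)
    (c : ℝ)
    (C : Ω' → ℝ) (hC : Measurable C)
    (hClaw : P'.map C = volume.withDensity (fun x => ENNReal.ofReal (1 / (π * (1 + x ^ 2))))) :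
    P.map (fun ω => T₁ ω / (T₁ ω + c ^ 2 * T₂ ω)) =
      P'.map (fun ω => 1 / (1 + c ^ 2 * C ω ^ 2)) := by
  set g : ℝ → ℝ := fun r => 1 / (1 + c ^ 2 * r)
  have hg : Measurable g := by fun_prop
  have hjoint : P.map (fun ω => (T₁ ω, T₂ ω)) = levyMeasure.prod levyMeasure := by
    rw [hindep.map_prod_eq_prod_map_map hT₁.aemeasurable hT₂.aemeasurable, hlaw₁, hlaw₂]
    rfl
  have hratio : P.map (fun ω => T₂ ω / T₁ ω) = sqCauchyMeasure := by
    rw [← map_div_prod_levyMeasure, ← hjoint, Measure.map_map (by fun_prop) (hT₁.prodMk hT₂)]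
    rfl
  have hsq : P'.map (fun ω => C ω ^ 2) = sqCauchyMeasure := by
    rw [← map_sq_cauchy_eq_sqCauchyMeasure, ← hClaw, Measure.map_map (by fun_prop) hC]
    rfl
  calc P.map (fun ω => T₁ ω / (T₁ ω + c ^ 2 * T₂ ω))
      = P.map (g ∘ fun ω => T₂ ω / T₁ ω) := by
        refine Measure.map_congr ?_
        filter_upwards [ae_pos_of_map_eq_withDensity_Ioi hT₁ hlaw₁] with ω hω
        simp only [g, Function.comp_apply]
        field_simp
    _ = P'.map (g ∘ fun ω => C ω ^ 2) := by
        rw [← Measure.map_map hg (by fun_prop), hratio, ← hsq, Measure.map_map hg (by fun_prop)]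
    _ = P'.map (fun ω => 1 / (1 + c ^ 2 * C ω ^ 2)) := rfl

theorem stable_half_ratio_eq_cauchy_law
    {Ω : Type*} [MeasurableSpace Ω] (P : Measure Ω) [IsProbabilityMeasure P]
    {Ω' : Type*} [MeasurableSpace Ω'] (P' : Measure Ω') [IsProbabilityMeasure P']
    (T₁ T₂ : Ω → ℝ) (hT₁ : Measurable T₁) (hT₂ : Measurable T₂)
    (hlaw₁ : P.map T₁ = (volume.restrict (Set.Ioi (0:ℝ))).withDensity
      (fun t => ENNReal.ofReal ((2 * π * t ^ 3) ^ (-(1:ℝ)/2) * Real.exp (-1 / (2 * t)))))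
    (hlaw₂ : P.map T₂ = (volume.restrict (Set.Ioi (0:ℝ))).withDensity
      (fun t => ENNReal.ofReal ((2 * π * t ^ 3) ^ (-(1:ℝ)/2) * Real.exp (-1 / (2 * t)))))
    (hindep : IndepFun T₁ T₂ P)
    (c : ℝ) (hc : 0 < c)
    (C : Ω' → ℝ) (hC : Measurable C)
    (hClaw : P'.map C = volume.withDensity (fun x => ENNReal.ofReal (1 / (π * (1 + x ^ 2))))) :
    P.map (fun ω => T₁ ω / (T₁ ω + c ^ 2 * T₂ ω)) =
      P'.map (fun ω => 1 / (1 + c ^ 2 * C ω ^ 2)) :=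
  stable_half_ratio_eq_cauchy_law_general P P' T₁ T₂ hT₁ hT₂ hlaw₁ hlaw₂ hindep c C hC hClaw
end

section
/- Let C be standard Cauchy and for each integer n ≥ 2 set A(n) = 1/(1 + (n-1)²C²). Then n²·A(n) converges in distribution, as n → ∞, to C², i.e., to 1/C², which has the same law as C². -/
/-!
Since `C ≠ 0` almost surely, `n² A(n) = n² / (1 + (n - 1)² C²) → 1 / C²` almost surely, and almost
sure convergence implies convergence in distribution. The limit `1 / C²` has the law of `C²`
because the standard Cauchy law is invariant under `x ↦ 1 / x`: the change of variables
`y = 1 / x` turns `dx / (π (1 + x²))` into `dy / (π (1 + y²))`.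
-/

open MeasureTheory Real Filter ProbabilityTheory
open scoped NNReal ENNReal Topology

theorem MeasureTheory.TendstoInDistribution.tendsto_integral_comp {ι Ω' E : Type*}
    {Ω : ι → Type*} {m : ∀ i, MeasurableSpace (Ω i)} {μ : (i : ι) → Measure (Ω i)}
    [∀ i, IsProbabilityMeasure (μ i)] {m' : MeasurableSpace Ω'} {μ' : Measure Ω'}
    [IsProbabilityMeasure μ'] [TopologicalSpace E] {mE : MeasurableSpace E}
    [OpensMeasurableSpace E] {l : Filter ι} {X : (i : ι) → Ω i → E} {Z : Ω' → E}
    (h : TendstoInDistribution X l Z μ μ') (f : BoundedContinuousFunction E ℝ) :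
    Tendsto (fun i => ∫ ω, f (X i ω) ∂μ i) l (𝓝 (∫ ω, f (Z ω) ∂μ')) := by
  have := ProbabilityMeasure.tendsto_iff_forall_integral_tendsto.1 h.tendsto f
  simp only [ProbabilityMeasure.coe_mk] at this
  rw [integral_map h.aemeasurable_limit f.continuous.aestronglyMeasurable] at this
  simpa only [integral_map (h.forall_aemeasurable _) f.continuous.aestronglyMeasurable] using this

/-- Inversion is a diffeomorphism of `ℝ \ {0}` with `|d(x⁻¹)/dx| = (x²)⁻¹`, and `{0}` is null. -/
theorem map_inv_withDensity_eq_self {ρ : ℝ → ℝ≥0∞}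
    (hρ : ∀ x ≠ 0, ENNReal.ofReal (x ^ 2)⁻¹ * ρ x⁻¹ = ρ x) :
    (volume.withDensity ρ).map (·⁻¹) = volume.withDensity ρ := by
  ext s hs
  have hs' : MeasurableSet (s \ {0}) := hs.diff (measurableSet_singleton 0)
  have hderiv : ∀ x ∈ s \ {0}, HasDerivWithinAt (·⁻¹) (-(x ^ 2)⁻¹) (s \ {0}) x :=
    fun x hx => (hasDerivAt_inv hx.2).hasDerivWithinAt
  have himage : (·⁻¹) '' (s \ {0}) = (·⁻¹) ⁻¹' s \ {0} := by
    ext x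
    simp
  have hnull : (volume : Measure ℝ) {0} = 0 := measure_singleton 0
  rw [Measure.map_apply measurable_inv hs, withDensity_apply _ (measurable_inv hs),
    withDensity_apply _ hs, ← setLIntegral_congr (sdiff_null_ae_eq_self (s := s) hnull),
    ← setLIntegral_congr (sdiff_null_ae_eq_self hnull), ← himage,
    lintegral_image_eq_lintegral_abs_deriv_mul hs' hderiv inv_injective.injOn]
  refine setLIntegral_congr_fun hs' fun x hx => ?_
  rw [abs_neg, abs_of_nonneg (by positivity), hρ x hx.2]

lemma cauchyMeasure_zero_one :
    cauchyMeasure 0 1 = volume.withDensity (fun x => ENNReal.ofReal (1 / (π * (1 + x ^ 2)))) := by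
  rw [cauchyMeasure_of_scale_ne_zero 0 one_ne_zero]
  congr 1
  funext x
  rw [cauchyPDF_def, cauchyPDFReal_def, NNReal.coe_one]
  congr 1
  field_simp
  ring

lemma map_inv_cauchyMeasure : (cauchyMeasure 0 1).map (·⁻¹) = cauchyMeasure 0 1 := by
  rw [cauchyMeasure_zero_one]
  refine map_inv_withDensity_eq_self fun x hx => ?_
  rw [← ENNReal.ofReal_mul (by positivity)]
  congr 1
  field_simp
  ring

lemma ae_ne_cauchyMeasure (x₀ : ℝ) {γ : ℝ≥0} (hγ : γ ≠ 0) (a : ℝ) :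
    ∀ᵐ x ∂cauchyMeasure x₀ γ, x ≠ a := by
  rw [cauchyMeasure_of_scale_ne_zero x₀ hγ]
  exact measure_eq_zero_iff_ae_notMem.1
    (withDensity_absolutelyContinuous _ _ (measure_singleton a))

/-- With `u = t⁻¹` the expression is `(u ^ 2 + (1 - u) ^ 2 * c ^ 2)⁻¹`, continuous at `u = 0`. -/
lemma tendsto_sq_mul_one_div_one_add_sub_one_sq_mul {c : ℝ} (hc : c ≠ 0) :
    Tendsto (fun t : ℝ => t ^ 2 * (1 / (1 + (t - 1) ^ 2 * c ^ 2))) atTop (𝓝 (c ^ 2)⁻¹) := by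
  have hcont : ContinuousAt (fun u : ℝ => (u ^ 2 + (1 - u) ^ 2 * c ^ 2)⁻¹) 0 :=
    (by fun_prop : Continuous fun u : ℝ => u ^ 2 + (1 - u) ^ 2 * c ^ 2).continuousAt.inv₀
      (by simpa using hc)
  have hlim := hcont.tendsto.comp tendsto_inv_atTop_zero
  rw [zero_pow two_ne_zero, sub_zero, one_pow, one_mul, zero_add] at hlim
  refine hlim.congr' ?_
  filter_upwards [eventually_gt_atTop 0] with t ht
  simp only [Function.comp_apply]
  field_simp

theorem A_n_scaled_tendsto_cauchy_sq
    {Ω : Type*} [MeasurableSpace Ω] (P : Measure Ω) [IsProbabilityMeasure P]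
    (C : Ω → ℝ) (hC : Measurable C)
    (hClaw : P.map C = volume.withDensity (fun x => ENNReal.ofReal (1 / (π * (1 + x ^ 2)))))
    (A : ℕ → Ω → ℝ) (hA : ∀ n, A n = fun ω => 1 / (1 + ((n : ℝ) - 1) ^ 2 * C ω ^ 2)) :
    ∀ f : BoundedContinuousFunction ℝ ℝ,
      Tendsto (fun n : ℕ => ∫ ω, f ((n : ℝ) ^ 2 * A n ω) ∂P) atTop
        (nhds (∫ ω, f (C ω ^ 2) ∂P)) := by
  intro f
  have hlaw : HasLaw C (cauchyMeasure 0 1) P :=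
    ⟨hC.aemeasurable, hClaw.trans cauchyMeasure_zero_one.symm⟩
  have hlaw_inv : HasLaw (fun ω => (C ω)⁻¹) (cauchyMeasure 0 1) P :=
    HasLaw.fun_comp ⟨measurable_inv.aemeasurable, map_inv_cauchyMeasure⟩ hlaw
  have hC_ne : ∀ᵐ ω ∂P, C ω ≠ 0 :=
    ae_of_ae_map hC.aemeasurable (by rw [hlaw.map_eq]; exact ae_ne_cauchyMeasure 0 one_ne_zero 0)
  have hlim : ∀ᵐ ω ∂P, Tendsto (fun n : ℕ => (n : ℝ) ^ 2 * A n ω) atTop (𝓝 (C ω ^ 2)⁻¹) := by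
    filter_upwards [hC_ne] with ω hω
    simpa [hA, Function.comp_def] using
      (tendsto_sq_mul_one_div_one_add_sub_one_sq_mul hω).comp tendsto_natCast_atTop_atTop
  have hdist :=
    tendstoInDistribution_of_ae_tendsto (fun n => by rw [hA]; fun_prop) (by fun_prop) hlim
  have hsame_law : ∫ ω, f (C ω ^ 2)⁻¹ ∂P = ∫ ω, f (C ω ^ 2) ∂P :=
    calc _ = ∫ ω, f ((C ω)⁻¹ ^ 2) ∂P := by simp only [inv_pow]
      _ = ∫ x, f (x ^ 2) ∂cauchyMeasure 0 1 :=
        hlaw_inv.integral_comp (f := fun x => f (x ^ 2)) (by fun_prop)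
      _ = _ := (hlaw.integral_comp (f := fun x => f (x ^ 2)) (by fun_prop)).symm
  exact hsame_law ▸ hdist.tendsto_integral_comp f
end
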